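/- arXiv:2303.00078 — 2 statements merged into one kernel-verified Lean document; each statement's English description precedes it below -/
import Mathlib

section
/- (One Point Theorem) Suppose C' = (1, c_2, ..., c_{n-1}) is orderly and c_{n-1} < c_n, and let m = ⌈c_n / c_{n-1}⌉. Then the coin system C = (1, c_2, ..., c_{n-1}, c_n) is orderly if and only if grd_C(m·c_{n-1}) ≤ m. -/
/-- The largest coin value in `C` that is at most `v` (or 0 if none). -/
def coinMax (C : List ℕ) (v : ℕ) : ℕ := (C.filter (· ≤ v)).foldr max 0

/-- Fuelled greedy coin count. -/
def grdAux (C : List ℕ) : ℕ → ℕ → ℕ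
  | 0, _ => 0
  | fuel + 1, v =>
    let c := coinMax C v
    if v = 0 ∨ c = 0 then 0 else 1 + grdAux C fuel (v - c)

/-- Number of coins used by the greedy algorithm to represent `v` with coin system `C`. -/
def grd (C : List ℕ) (v : ℕ) : ℕ := grdAux C v v

/-- The set of sizes of representations of `v` as nonnegative integer combinations of
the coin values in `C`. -/
def reprCosts (C : List ℕ) (v : ℕ) : Set ℕ :=
  {k | ∃ x : List ℕ, x.length = C.length ∧ (List.zipWith (· * ·) x C).sum = v ∧ x.sum = k}

/-- Minimum number of coins needed to represent `v` with coin system `C`. -/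
noncomputable def opt (C : List ℕ) (v : ℕ) : ℕ := sInf (reprCosts C v)

/-- A coin system is orderly if greedy is optimal for every positive value. -/
def Orderly (C : List ℕ) : Prop := ∀ v : ℕ, 0 < v → grd C v = opt C v


/-!
Let `b` be the largest coin of `C'`, `C = C' ++ [c]`, and write `m * b = c + d` with `d < b`.
If `C` is orderly then `grd_C (m * b) = opt_C (m * b) ≤ m`, using `m` coins `b`.
Conversely, greedy for `C` on `m * b` takes one `c` and then works in `C'` on `d`, so the test
says `opt_{C'} d ≤ m - 1`. We show `grd_C v ≤ opt_C v` by strong induction. If an optimal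
representation of `v` uses `c`, greedy also starts with `c` and the induction hypothesis applies
to `v - c`. Otherwise `opt_C v = opt_{C'} v`; writing `v = u + (m - 1) * b` (possible since
`(m - 1) * b < c ≤ v`), greedy trades its first coin `c` for one coin `b` plus the deficit `d`:
`grd_C v = 1 + grd_C (v - c) ≤ 1 + opt_{C'} (v - c) = grd_{C'} (v - c + b) = opt_{C'} (u + d)
≤ opt_{C'} u + (m - 1) = grd_{C'} v = opt_{C'} v`.
-/

lemma List.IsChain.isGreatest_getLast {α : Type*} [Preorder α] {l : List α}
    (h : l.IsChain (· < ·)) (hne : l ≠ []) :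
    IsGreatest {a | a ∈ l} (l.getLast hne) :=
  ⟨List.getLast_mem hne, fun _ ha => ((List.isChain_iff_pairwise.1 h).imp le_of_lt).rel_getLast ha⟩

lemma exists_add_eq_ceil_div_mul {b : ℕ} (hb : 0 < b) (c : ℕ) :
    ∃ d, c + d = (c + b - 1) / b * b ∧ d < b := by
  have h₁ := Nat.lt_div_mul_add (a := c + b - 1) hb
  have h₂ := Nat.div_mul_le_self (c + b - 1) b
  exact ⟨(c + b - 1) / b * b - c, by omega, by omega⟩

section CoinMax

variable {C : List ℕ} {b c v : ℕ}

lemma coinMax_le_self (C : List ℕ) (v : ℕ) : coinMax C v ≤ v :=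
  List.max_le_of_forall_le _ v fun a ha => by simpa using (List.mem_filter.1 ha).2

lemma le_coinMax {a : ℕ} (ha : a ∈ C) (hav : a ≤ v) : a ≤ coinMax C v :=
  List.le_max_of_le' 0 (List.mem_filter.2 ⟨ha, by simpa using hav⟩) le_rfl

lemma coinMax_mem {a : ℕ} (ha : a ∈ C) (hav : a ≤ v) : coinMax C v ∈ C := by
  have hne : C.filter (· ≤ v) ≠ [] :=
    List.ne_nil_of_mem (List.mem_filter.2 ⟨ha, by simpa using hav⟩)
  have hmax := List.foldr_max_of_ne_nil hne
  exact (List.mem_filter.1 (List.maximum_mem hmax.symm)).1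

lemma coinMax_eq_of_isGreatest (hb : IsGreatest {a | a ∈ C} b)
    (hbv : b ≤ v) : coinMax C v = b :=
  le_antisymm (hb.2 (coinMax_mem hb.1 hbv)) (le_coinMax hb.1 hbv)

lemma coinMax_append_singleton_of_lt (hv : v < c) :
    coinMax (C ++ [c]) v = coinMax C v := by
  simp [coinMax, List.filter_append, Nat.not_le.2 hv]

end CoinMax

section Greedy

variable {C D : List ℕ} {v : ℕ}

lemma grdAux_congr_fuel (C : List ℕ) {f₁ f₂ : ℕ} (h₁ : v ≤ f₁) (h₂ : v ≤ f₂) :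
    grdAux C f₁ v = grdAux C f₂ v := by
  induction f₁ generalizing v f₂ with
  | zero =>
    obtain rfl : v = 0 := by omega
    cases f₂ <;> simp [grdAux]
  | succ f ih =>
    cases f₂ with
    | zero =>
      obtain rfl : v = 0 := by omega
      simp [grdAux]
    | succ g =>
      by_cases hv : v = 0 ∨ coinMax C v = 0
      · simp [grdAux, hv]
      · have hle := coinMax_le_self C v
        simp only [grdAux, hv, if_false]
        rw [ih (f₂ := g) (by omega) (by omega)]

lemma grd_zero (C : List ℕ) : grd C 0 = 0 := by simp [grd, grdAux]

lemma grd_eq_add_one (hv : 0 < coinMax C v) : grd C v = grd C (v - coinMax C v) + 1 := by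
  have hle := coinMax_le_self C v
  obtain ⟨u, rfl⟩ : ∃ u, v = u + 1 := ⟨v - 1, by omega⟩
  rw [grd, grdAux, if_neg (by omega), grd, add_comm]
  exact congrArg (· + 1) (grdAux_congr_fuel C (by omega) le_rfl)

lemma grd_congr (h : ∀ w ≤ v, coinMax C w = coinMax D w) : grd C v = grd D v := by
  suffices ∀ f v, (∀ w ≤ v, coinMax C w = coinMax D w) → grdAux C f v = grdAux D f v from
    this v v h
  intro f
  induction f with
  | zero => simp [grdAux]
  | succ f ih =>
    intro v h
    simp only [grdAux, h v le_rfl]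
    rw [ih _ fun w hw => h w (by omega)]

lemma grd_append_singleton_of_lt {c : ℕ} (hv : v < c) : grd (C ++ [c]) v = grd C v :=
  grd_congr fun _ hw => coinMax_append_singleton_of_lt (by omega)

lemma grd_add_of_isGreatest {b : ℕ} (hb : IsGreatest {a | a ∈ C} b) (hb0 : 0 < b) (u : ℕ) :
    grd C (u + b) = grd C u + 1 := by
  have hmax := coinMax_eq_of_isGreatest hb (Nat.le_add_left b u)
  rw [grd_eq_add_one (by rw [hmax]; exact hb0), hmax, Nat.add_sub_cancel]

lemma grd_add_mul_of_isGreatest {b : ℕ} (hb : IsGreatest {a | a ∈ C} b) (hb0 : 0 < b)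
    (u k : ℕ) : grd C (u + k * b) = grd C u + k := by
  induction k with
  | zero => simp
  | succ k ih => rw [Nat.succ_mul, ← add_assoc, grd_add_of_isGreatest hb hb0, ih, add_assoc]

end Greedy

section Representations

variable {C D : List ℕ} {k v : ℕ}

lemma mem_reprCosts_nil : k ∈ reprCosts [] v ↔ v = 0 ∧ k = 0 := by
  simp [reprCosts, eq_comm]

lemma mem_reprCosts_singleton {c : ℕ} : k ∈ reprCosts [c] v ↔ k * c = v := by
  simp [reprCosts, List.length_eq_one_iff]

lemma mem_reprCosts_append : k ∈ reprCosts (C ++ D) v ↔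
    ∃ v₁ v₂ k₁ k₂, k₁ ∈ reprCosts C v₁ ∧ k₂ ∈ reprCosts D v₂ ∧ v₁ + v₂ = v ∧ k₁ + k₂ = k := by
  constructor
  · rintro ⟨x, hlen, hval, hcost⟩
    rw [List.length_append] at hlen
    have hlen₁ : (x.take C.length).length = C.length := by simp; omega
    rw [← List.take_append_drop C.length x, List.zipWith_append hlen₁] at hval
    refine ⟨_, _, _, _, ⟨x.take C.length, hlen₁, rfl, rfl⟩,
      ⟨x.drop C.length, by simp; omega, rfl, rfl⟩, by simpa using hval, ?_⟩
    rw [← List.sum_append, List.take_append_drop, hcost]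
  · rintro ⟨v₁, v₂, k₁, k₂, ⟨x, hx, rfl, rfl⟩, ⟨y, hy, rfl, rfl⟩, rfl, rfl⟩
    exact ⟨x ++ y, by simp [hx, hy], by simp [List.zipWith_append hx], by simp⟩

lemma zero_mem_reprCosts (C : List ℕ) : 0 ∈ reprCosts C 0 := by
  induction C with
  | nil => exact mem_reprCosts_nil.2 ⟨rfl, rfl⟩
  | cons a C ih =>
    rw [← List.singleton_append, mem_reprCosts_append]
    exact ⟨0, 0, 0, 0, mem_reprCosts_singleton.2 (zero_mul a), ih, rfl, rfl⟩

lemma add_mem_reprCosts {k₁ k₂ v₁ v₂ : ℕ} (h₁ : k₁ ∈ reprCosts C v₁) (h₂ : k₂ ∈ reprCosts C v₂) :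
    k₁ + k₂ ∈ reprCosts C (v₁ + v₂) := by
  induction C generalizing k₁ k₂ v₁ v₂ with
  | nil =>
    obtain ⟨rfl, rfl⟩ := mem_reprCosts_nil.1 h₁
    simpa using h₂
  | cons a C ih =>
    rw [← List.singleton_append, mem_reprCosts_append] at h₁ h₂ ⊢
    obtain ⟨u₁, w₁, i₁, j₁, hi₁, hj₁, rfl, rfl⟩ := h₁
    obtain ⟨u₂, w₂, i₂, j₂, hi₂, hj₂, rfl, rfl⟩ := h₂
    rw [mem_reprCosts_singleton] at hi₁ hi₂
    refine ⟨u₁ + u₂, w₁ + w₂, i₁ + i₂, j₁ + j₂, ?_, ih hj₁ hj₂, by ring, by ring⟩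
    rw [mem_reprCosts_singleton, add_mul, hi₁, hi₂]

lemma one_mem_reprCosts_of_mem {a : ℕ} (ha : a ∈ C) : 1 ∈ reprCosts C a := by
  obtain ⟨s, t, rfl⟩ := List.append_of_mem ha
  rw [← List.singleton_append, mem_reprCosts_append]
  refine ⟨0, a, 0, 1, zero_mem_reprCosts s, ?_, by simp, by simp⟩
  rw [mem_reprCosts_append]
  exact ⟨a, 0, 1, 0, mem_reprCosts_singleton.2 (one_mul a), zero_mem_reprCosts t, by simp, by simp⟩

lemma mul_mem_reprCosts {a : ℕ} (ha : a ∈ C) (k : ℕ) : k ∈ reprCosts C (k * a) := by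
  induction k with
  | zero => simpa using zero_mem_reprCosts C
  | succ k ih => simpa [add_mul] using add_mem_reprCosts ih (one_mem_reprCosts_of_mem ha)

end Representations

section Optimal

variable {C : List ℕ}

lemma opt_zero (C : List ℕ) : opt C 0 = 0 :=
  Nat.eq_zero_of_le_zero (Nat.sInf_le (zero_mem_reprCosts C))

lemma opt_mem (h1 : 1 ∈ C) (v : ℕ) : opt C v ∈ reprCosts C v :=
  Nat.sInf_mem ⟨v, by simpa using mul_mem_reprCosts h1 v⟩

lemma opt_add_le (h1 : 1 ∈ C) (v w : ℕ) : opt C (v + w) ≤ opt C v + opt C w :=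
  Nat.sInf_le (add_mem_reprCosts (opt_mem h1 v) (opt_mem h1 w))

lemma grd_mem_reprCosts (h1 : 1 ∈ C) (v : ℕ) : grd C v ∈ reprCosts C v := by
  induction v using Nat.strong_induction_on with
  | _ v ih =>
    rcases Nat.eq_zero_or_pos v with rfl | hv
    · simpa [grd_zero] using zero_mem_reprCosts C
    · have hpos : 0 < coinMax C v := le_coinMax h1 hv
      have hle := coinMax_le_self C v
      rw [grd_eq_add_one hpos]
      simpa [Nat.sub_add_cancel hle] using
        add_mem_reprCosts (ih (v - coinMax C v) (by omega))
          (one_mem_reprCosts_of_mem (coinMax_mem h1 hv))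

lemma opt_le_grd (h1 : 1 ∈ C) (v : ℕ) : opt C v ≤ grd C v :=
  Nat.sInf_le (grd_mem_reprCosts h1 v)

lemma opt_append_singleton_le (h1 : 1 ∈ C) (c v : ℕ) : opt (C ++ [c]) v ≤ opt C v :=
  Nat.sInf_le <| mem_reprCosts_append.2
    ⟨v, 0, opt C v, 0, opt_mem h1 v, mem_reprCosts_singleton.2 (zero_mul c), rfl, rfl⟩

lemma opt_append_singleton_eq_or (h1 : 1 ∈ C) (c v : ℕ) :
    opt (C ++ [c]) v = opt C v ∨ ∃ w, w + c = v ∧ opt (C ++ [c]) w + 1 ≤ opt (C ++ [c]) v := by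
  obtain ⟨v₁, v₂, k₁, k₂, hk₁, hk₂, hv, hk⟩ :=
    mem_reprCosts_append.1 (opt_mem (List.mem_append_left _ h1) v)
  rw [mem_reprCosts_singleton] at hk₂
  rcases k₂ with _ | j
  · refine Or.inl (le_antisymm (opt_append_singleton_le h1 c v) ?_)
    rw [← hk, ← hv, ← hk₂, zero_mul, add_zero, add_zero]
    exact Nat.sInf_le hk₁
  · refine Or.inr ⟨v₁ + j * c, by rw [← hv, ← hk₂]; ring, ?_⟩
    rw [← hk, ← add_assoc, add_le_add_iff_right]
    exact Nat.sInf_le (mem_reprCosts_append.2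
      ⟨v₁, j * c, k₁, j, hk₁, mem_reprCosts_singleton.2 rfl, rfl, rfl⟩)

lemma Orderly.grd_eq_opt (hC : Orderly C) (v : ℕ) : grd C v = opt C v := by
  rcases Nat.eq_zero_or_pos v with rfl | hv
  · rw [grd_zero, opt_zero]
  · exact hC v hv

lemma orderly_of_grd_le_opt (h1 : 1 ∈ C) (h : ∀ v, grd C v ≤ opt C v) : Orderly C :=
  fun v _ => le_antisymm (h v) (opt_le_grd h1 v)

end Optimal

section OnePoint

variable {C : List ℕ} {b c : ℕ}

lemma isGreatest_append_singleton (hb : IsGreatest {a | a ∈ C} b) (hbc : b ≤ c) :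
    IsGreatest {a | a ∈ C ++ [c]} c := by
  refine ⟨by simp, fun a ha => ?_⟩
  rcases List.mem_append.1 ha with ha | ha
  · exact (hb.2 ha).trans hbc
  · exact (List.mem_singleton.1 ha).le

lemma grd_append_singleton_mul_le (h1 : 1 ∈ C) (hb : IsGreatest {a | a ∈ C} b)
    (hC : Orderly C) (hCc : Orderly (C ++ [c])) (m : ℕ) : grd (C ++ [c]) (m * b) ≤ m :=
  calc grd (C ++ [c]) (m * b) = opt (C ++ [c]) (m * b) := hCc.grd_eq_opt _
    _ ≤ opt C (0 + m * b) := by rw [zero_add]; exact opt_append_singleton_le h1 c _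
    _ = m := by rw [← hC.grd_eq_opt, grd_add_mul_of_isGreatest hb (hb.2 h1), grd_zero, zero_add]

lemma grd_append_singleton_add_le_opt (h1 : 1 ∈ C) (hb : IsGreatest {a | a ∈ C} b)
    (hC : Orderly C) (hbc : b ≤ c) {m d : ℕ} (hd : c + d = m * b) (hdb : d < b)
    (hdm : opt C d + 1 ≤ m) {w : ℕ} (hw : grd (C ++ [c]) w ≤ opt (C ++ [c]) w) :
    grd (C ++ [c]) (w + c) ≤ opt C (w + c) := by
  have hb0 : 0 < b := hb.2 h1
  obtain ⟨n, rfl⟩ : ∃ n, m = n + 1 := ⟨m - 1, by omega⟩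
  rw [add_mul, one_mul] at hd
  obtain ⟨u, hu⟩ : ∃ u, w + c = u + n * b := ⟨w + c - n * b, by omega⟩
  have hwb : w + b = u + d := by omega
  calc grd (C ++ [c]) (w + c) = grd (C ++ [c]) w + 1 :=
        grd_add_of_isGreatest (isGreatest_append_singleton hb hbc) (by omega) w
    _ ≤ opt C w + 1 := by grw [hw, opt_append_singleton_le h1]
    _ = opt C (u + d) := by
      rw [← hwb, ← hC.grd_eq_opt, ← hC.grd_eq_opt, grd_add_of_isGreatest hb hb0]
    _ ≤ opt C u + opt C d := opt_add_le h1 u d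
    _ ≤ opt C u + n := by omega
    _ = opt C (w + c) := by
      rw [← hC.grd_eq_opt, ← hC.grd_eq_opt, hu, grd_add_mul_of_isGreatest hb hb0]

lemma orderly_append_singleton_of_grd_le (h1 : 1 ∈ C) (hb : IsGreatest {a | a ∈ C} b)
    (hC : Orderly C) (hbc : b ≤ c) {m d : ℕ} (hd : c + d = m * b) (hdb : d < b)
    (hgrd : grd (C ++ [c]) (m * b) ≤ m) : Orderly (C ++ [c]) := by
  have hc : IsGreatest {a | a ∈ C ++ [c]} c := isGreatest_append_singleton hb hbc
  have hc0 : 0 < c := Nat.lt_of_lt_of_le (hb.2 h1) hbc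
  have hdm : opt C d + 1 ≤ m := by
    rwa [← hd, add_comm, grd_add_of_isGreatest hc hc0, grd_append_singleton_of_lt (by omega),
      hC.grd_eq_opt] at hgrd
  refine orderly_of_grd_le_opt (List.mem_append_left _ h1) fun v => ?_
  induction v using Nat.strong_induction_on with
  | _ v ih =>
    rcases opt_append_singleton_eq_or h1 c v with hopt | ⟨w, rfl, hw⟩
    · rw [hopt]
      rcases lt_or_ge v c with hvc | hcv
      · rw [grd_append_singleton_of_lt hvc, hC.grd_eq_opt]
      · obtain ⟨w, rfl⟩ := Nat.exists_eq_add_of_le' hcv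
        exact grd_append_singleton_add_le_opt h1 hb hC hbc hd hdb hdm (ih w (by omega))
    · calc grd (C ++ [c]) (w + c) = grd (C ++ [c]) w + 1 := grd_add_of_isGreatest hc hc0 w
        _ ≤ opt (C ++ [c]) w + 1 := by grw [ih w (by omega)]
        _ ≤ opt (C ++ [c]) (w + c) := hw

theorem orderly_append_singleton_iff (h1 : 1 ∈ C) (hb : IsGreatest {a | a ∈ C} b)
    (hC : Orderly C) (hbc : b ≤ c) {m d : ℕ} (hd : c + d = m * b) (hdb : d < b) :
    Orderly (C ++ [c]) ↔ grd (C ++ [c]) (m * b) ≤ m :=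
  ⟨fun hCc => grd_append_singleton_mul_le h1 hb hC hCc m,
    orderly_append_singleton_of_grd_le h1 hb hC hbc hd hdb⟩

end OnePoint

theorem stmt_5 (C' : List ℕ) (hne : C' ≠ [])
    (hchain : List.Chain' (· < ·) C') (hhead : C'.getD 0 0 = 1)
    (hord : Orderly C') (c : ℕ) (hc : C'.getLast hne < c)
    (m : ℕ) (hm : m = (c + C'.getLast hne - 1) / C'.getLast hne) :
    Orderly (C' ++ [c]) ↔ grd (C' ++ [c]) (m * C'.getLast hne) ≤ m := by
  have h1 : 1 ∈ C' := by
    cases C' with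
    | nil => exact absurd rfl hne
    | cons a l => simp_all
  have hb := hchain.isGreatest_getLast hne
  obtain ⟨d, hd, hdb⟩ := exists_add_eq_ceil_div_mul (hb.2 h1) c
  rw [← hm] at hd
  exact orderly_append_singleton_iff h1 hb hord hc.le hd hdb
end

section
/- If C = (1, c_2, ..., c_n) is an orderly coin system, then for all i with 2 ≤ i ≤ n, c_i - c_{i-1} ≥ c_2 - 1 (where c_1 = 1). -/
/-!
Orderliness enters only through sums of two coins: such a sum costs at most two coins, so once
greedy has taken the largest coin not exceeding `s + t`, the remainder is zero or a coin.

Suppose two coins `p < b` are closer than `c₂ - 1`, with `b` minimal. Call a coin `Y ≥ b` good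
if the next coin is at least `Y + b - 1`; the largest coin is good. If `Y > b` is good, so is
the greedy coin `u` of `Y + 1 - p`: a coin strictly between `u` and `Y`, or a gap above `u` that
is too short, would let greedy (on `x + p`, `x + b` or `u + b`) produce two coins below `b` closer
than `c₂ - 1`, or a coin strictly between `1` and `c₂`. Descending, `b` itself is good, and then
greedy writes `p + p = b + (2p - b)`, so `2p - b < p` are two coins below `b` at distance
`b - p`, contradicting the minimality of `b`.
-/

theorem List.sum_zipWith_add {M : Type*} [AddCommMonoid M] (x y : List M)
    (h : x.length = y.length) : (List.zipWith (· + ·) x y).sum = x.sum + y.sum := by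
  induction x generalizing y with
  | nil => obtain rfl := List.eq_nil_of_length_eq_zero h.symm; simp
  | cons a x ih =>
    cases y with
    | nil => simp at h
    | cons b y =>
      simp only [List.zipWith_cons_cons, List.sum_cons, ih y (by simpa using h)]
      abel

theorem List.sum_zipWith_add_mul {R : Type*} [Semiring R] (x y C : List R)
    (hx : x.length = C.length) (hy : y.length = C.length) :
    (List.zipWith (· * ·) (List.zipWith (· + ·) x y) C).sum =
      (List.zipWith (· * ·) x C).sum + (List.zipWith (· * ·) y C).sum := by
  induction C generalizing x y with
  | nil => simp
  | cons c C ih =>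
    cases x with
    | nil => simp at hx
    | cons a x =>
      cases y with
      | nil => simp at hy
      | cons b y =>
        simp only [List.zipWith_cons_cons, List.sum_cons, add_mul,
          ih x y (by simpa using hx) (by simpa using hy)]
        abel

theorem List.Pairwise.getD_zero_le {α : Type*} [Preorder α] {C : List α}
    (h : C.Pairwise (· < ·)) (d : α) {x : α} (hx : x ∈ C) : C.getD 0 d ≤ x := by
  rcases C with _ | ⟨a, l⟩
  · cases hx
  · rcases List.mem_cons.1 hx with rfl | hx
    · exact le_rfl
    · exact (List.rel_of_pairwise_cons h hx).le

theorem List.Pairwise.eq_getD_zero_or_getD_one_le {α : Type*} [Preorder α] {C : List α}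
    (h : C.Pairwise (· < ·)) (d : α) {x : α} (hx : x ∈ C) : x = C.getD 0 d ∨ C.getD 1 d ≤ x := by
  rcases C with _ | ⟨a, l⟩
  · cases hx
  · rcases List.mem_cons.1 hx with rfl | hx
    · exact Or.inl rfl
    · exact Or.inr ((List.pairwise_cons.1 h).2.getD_zero_le d hx)

section CoinMax

variable {C : List ℕ} {v : ℕ}

theorem le_coinMax_s9 {x : ℕ} (hx : x ∈ C) (hxv : x ≤ v) : x ≤ coinMax C v :=
  List.le_max_of_le' 0 (List.mem_filter.2 ⟨hx, by simpa using hxv⟩) le_rfl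

theorem coinMax_le (v : ℕ) : coinMax C v ≤ v :=
  List.max_le_of_forall_le _ v fun _ hx => by simpa using List.of_mem_filter hx

theorem coinMax_mem_s9 (h1 : 1 ∈ C) (hv : 1 ≤ v) : coinMax C v ∈ C := by
  have hne : C.filter (· ≤ v) ≠ [] := List.ne_nil_of_mem (List.mem_filter.2 ⟨h1, by simpa⟩)
  exact List.mem_of_mem_filter (List.maximum_mem (List.foldr_max_of_ne_nil hne).symm)

end CoinMax

section Greedy

variable {C : List ℕ}

theorem grdAux_zero (fuel : ℕ) : grdAux C fuel 0 = 0 := by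
  cases fuel <;> simp [grdAux]

theorem grdAux_eq_of_le (h1 : 1 ∈ C) {v f₁ f₂ : ℕ} (hf₁ : v ≤ f₁) (hf₂ : v ≤ f₂) :
    grdAux C f₁ v = grdAux C f₂ v := by
  induction v using Nat.strong_induction_on generalizing f₁ f₂ with
  | _ v ih =>
    rcases Nat.eq_zero_or_pos v with rfl | hv
    · rw [grdAux_zero, grdAux_zero]
    obtain ⟨a, rfl⟩ : ∃ a, f₁ = a + 1 := ⟨f₁ - 1, by omega⟩
    obtain ⟨b, rfl⟩ : ∃ b, f₂ = b + 1 := ⟨f₂ - 1, by omega⟩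
    have hc : 1 ≤ coinMax C v := le_coinMax_s9 h1 hv
    have hcv := coinMax_le (C := C) v
    simp only [grdAux, show ¬(v = 0 ∨ coinMax C v = 0) by omega, if_false]
    rw [ih _ (by omega) (f₁ := a) (f₂ := b) (by omega) (by omega)]

theorem grd_eq_one_add (h1 : 1 ∈ C) {v : ℕ} (hv : 1 ≤ v) :
    grd C v = 1 + grd C (v - coinMax C v) := by
  have hc : 1 ≤ coinMax C v := le_coinMax_s9 h1 hv
  have hcv := coinMax_le (C := C) v
  obtain ⟨w, rfl⟩ : ∃ w, v = w + 1 := ⟨v - 1, by omega⟩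
  simp only [grd, grdAux, show ¬(w + 1 = 0 ∨ coinMax C (w + 1) = 0) by omega, if_false]
  rw [grdAux_eq_of_le h1 (by omega) le_rfl]

theorem eq_zero_or_mem_of_grd_le_one (h1 : 1 ∈ C) {v : ℕ} (h : grd C v ≤ 1) :
    v = 0 ∨ v ∈ C := by
  rcases Nat.eq_zero_or_pos v with rfl | hv
  · exact Or.inl rfl
  have hcv := coinMax_le (C := C) v
  have hrest : v - coinMax C v = 0 := by
    by_contra hne
    have := grd_eq_one_add h1 (v := v - coinMax C v) (by omega)
    rw [grd_eq_one_add h1 hv] at h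
    omega
  exact Or.inr (show v = coinMax C v by omega ▸ coinMax_mem_s9 h1 hv)

end Greedy

section Representations

variable {C : List ℕ}

theorem reprCosts_add {k k' v v' : ℕ} (h : k ∈ reprCosts C v) (h' : k' ∈ reprCosts C v') :
    k + k' ∈ reprCosts C (v + v') := by
  obtain ⟨x, hx, hxv, rfl⟩ := h
  obtain ⟨y, hy, hyv, rfl⟩ := h'
  refine ⟨List.zipWith (· + ·) x y, by simp [hx, hy], ?_, List.sum_zipWith_add x y (by omega)⟩
  rw [List.sum_zipWith_add_mul x y C hx hy, hxv, hyv]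

theorem cons_mem_reprCosts_cons {a k v : ℕ} (m : ℕ) (h : k ∈ reprCosts C v) :
    m + k ∈ reprCosts (a :: C) (m * a + v) := by
  obtain ⟨x, hx, rfl, rfl⟩ := h
  exact ⟨m :: x, by simp [hx], by simp, by simp⟩

theorem zero_mem_reprCosts_zero : 0 ∈ reprCosts C 0 := by
  induction C with
  | nil => exact ⟨[], rfl, rfl, rfl⟩
  | cons a C ih => simpa using cons_mem_reprCosts_cons (a := a) 0 ih

theorem one_mem_reprCosts {s : ℕ} (hs : s ∈ C) : 1 ∈ reprCosts C s := by
  induction C with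
  | nil => cases hs
  | cons a C ih =>
    rcases List.mem_cons.1 hs with rfl | hs
    · simpa using cons_mem_reprCosts_cons (a := s) 1 (zero_mem_reprCosts_zero (C := C))
    · simpa using cons_mem_reprCosts_cons (a := a) 0 (ih hs)

theorem opt_add_le_two {s t : ℕ} (hs : s ∈ C) (ht : t ∈ C) : opt C (s + t) ≤ 2 :=
  Nat.sInf_le (reprCosts_add (one_mem_reprCosts hs) (one_mem_reprCosts ht))

end Representations

def GapAbove (C : List ℕ) (Y g : ℕ) : Prop := ∀ x ∈ C, Y < x → Y + g ≤ x

theorem coinMax_eq_of_gapAbove {C : List ℕ} {v Y g : ℕ} (hY : Y ∈ C) (hYv : Y ≤ v)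
    (hvY : v < Y + g) (hgap : GapAbove C Y g) : coinMax C v = Y := by
  refine le_antisymm (List.max_le_of_forall_le _ Y fun x hx => ?_) (le_coinMax_s9 hY hYv)
  have hxv : x ≤ v := by simpa using List.of_mem_filter hx
  by_contra! hYx
  linarith [hgap x (List.mem_of_mem_filter hx) hYx]

def TwoCoinGreedy (C : List ℕ) : Prop :=
  ∀ s ∈ C, ∀ t ∈ C, s + t - coinMax C (s + t) = 0 ∨ s + t - coinMax C (s + t) ∈ C

theorem Orderly.twoCoinGreedy {C : List ℕ} (hord : Orderly C) (h1 : 1 ∈ C)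
    (hpos : ∀ x ∈ C, 0 < x) : TwoCoinGreedy C := by
  intro s hs t ht
  have hst : 0 < s + t := by linarith [hpos s hs]
  have hgrd : grd C (s + t) ≤ 2 := hord _ hst ▸ opt_add_le_two hs ht
  rw [grd_eq_one_add h1 hst] at hgrd
  exact eq_zero_or_mem_of_grd_le_one h1 (by omega)

theorem TwoCoinGreedy.sub_mem_of_gapAbove {C : List ℕ} (hC : TwoCoinGreedy C)
    {s t Y g : ℕ} (hs : s ∈ C) (ht : t ∈ C) (hY : Y ∈ C) (hYst : Y ≤ s + t)
    (hstY : s + t < Y + g) (hgap : GapAbove C Y g) : s + t - Y = 0 ∨ s + t - Y ∈ C :=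
  coinMax_eq_of_gapAbove hY hYst hstY hgap ▸ hC s hs t ht

structure MinimalShortGap (C : List ℕ) (c p b : ℕ) : Prop where
  lower_mem : p ∈ C
  upper_mem : b ∈ C
  lower_lt_upper : p < b
  short : b - p < c - 1
  long_below : ∀ x ∈ C, ∀ x' ∈ C, x < x' → x' < b → c - 1 ≤ x' - x

namespace MinimalShortGap

variable {C : List ℕ} {c p b : ℕ}

theorem le_lower (hsmall : ∀ x ∈ C, x = 1 ∨ c ≤ x) (h : MinimalShortGap C c p b) : c ≤ p := by
  have := h.short
  have := h.lower_lt_upper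
  rcases hsmall p h.lower_mem with rfl | hp
  · rcases hsmall b h.upper_mem with rfl | hb <;> omega
  · exact hp

theorem not_gapAbove_upper (hC : TwoCoinGreedy C) (hsmall : ∀ x ∈ C, x = 1 ∨ c ≤ x)
    (h : MinimalShortGap C c p b) : ¬ GapAbove C b (b - 1) := by
  intro hgap
  have := h.le_lower hsmall
  have := h.short
  have := h.lower_lt_upper
  rcases hC.sub_mem_of_gapAbove h.lower_mem h.lower_mem h.upper_mem (by omega) (by omega) hgap
    with h0 | hmem
  · omega
  · have := h.long_below _ hmem _ h.lower_mem (by omega) h.lower_lt_upper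
    omega

theorem not_mem_of_gapAbove (hC : TwoCoinGreedy C) (h : MinimalShortGap C c p b) {Y x : ℕ}
    (hY : Y ∈ C) (hgap : GapAbove C Y (b - 1)) (hx : x ∈ C) (hxY : x < Y) (hYx : Y + 2 ≤ x + p) :
    False := by
  have := h.short
  have := h.lower_lt_upper
  rcases hC.sub_mem_of_gapAbove hx h.lower_mem hY (by omega) (by omega) hgap with h0 | hr
  · omega
  rcases Nat.lt_or_ge (x + 1) Y with hxY' | hxY'
  · rcases hC.sub_mem_of_gapAbove hx h.upper_mem hY (by omega) (by omega) hgap with h0 | hr'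
    · omega
    · have := h.long_below _ hr _ hr' (by omega) (by omega)
      omega
  · have := h.long_below _ (show p - 1 ∈ C by convert hr using 1; omega) _ h.lower_mem
      (by omega) h.lower_lt_upper
    omega

theorem exists_gapAbove_of_lt (hC : TwoCoinGreedy C) (h1 : 1 ∈ C)
    (hsmall : ∀ x ∈ C, x = 1 ∨ c ≤ x) (h : MinimalShortGap C c p b) {Y : ℕ} (hY : Y ∈ C)
    (hbY : b < Y) (hgap : GapAbove C Y (b - 1)) :
    ∃ u ∈ C, b ≤ u ∧ u < Y ∧ GapAbove C u (b - 1) := by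
  have := h.le_lower hsmall
  have := h.short
  have := h.lower_lt_upper
  set u := coinMax C (Y + 1 - p)
  have hu : u ∈ C := coinMax_mem_s9 h1 (by omega)
  have huY : u ≤ Y + 1 - p := coinMax_le _
  have hbetween : ∀ x ∈ C, u < x → Y ≤ x := fun x hx hux => by
    by_contra! hxY
    have : ¬ x ≤ Y + 1 - p := fun hle => by linarith [le_coinMax_s9 (C := C) hx hle]
    exact h.not_mem_of_gapAbove hC hY hgap hx hxY (by omega)
  have hub : u + b ≤ Y + 1 := by
    by_contra! hub
    rcases hC.sub_mem_of_gapAbove hu h.upper_mem hY (by omega) (by omega) hgap with h0 | hr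
    · omega
    · rcases hsmall _ hr with hr1 | hcr <;> omega
  have hbu : b ≤ u := by
    by_contra! hbu
    linarith [hbetween b h.upper_mem hbu]
  refine ⟨u, hu, hbu, by omega, fun x hx hux => ?_⟩
  rcases (hbetween x hx hux).eq_or_lt with rfl | hYx
  · omega
  · linarith [hgap x hx hYx]

theorem false (hC : TwoCoinGreedy C) (h1 : 1 ∈ C) (hsmall : ∀ x ∈ C, x = 1 ∨ c ≤ x)
    (h : MinimalShortGap C c p b) : False := by
  obtain ⟨M, hM, hMmax⟩ := C.toFinset.exists_max_image id ⟨b, List.mem_toFinset.2 h.upper_mem⟩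
  simp only [List.mem_toFinset, id] at hM hMmax
  suffices ∀ Y ∈ C, b ≤ Y → GapAbove C Y (b - 1) → False from
    this M hM (hMmax b h.upper_mem) fun x hx hMx => absurd (hMmax x hx) (by omega)
  intro Y
  induction Y using Nat.strong_induction_on with
  | _ Y ih =>
    intro hY hbY hgap
    rcases hbY.eq_or_lt with rfl | hbY
    · exact h.not_gapAbove_upper hC hsmall hgap
    · obtain ⟨u, hu, hbu, huY, hgapu⟩ := h.exists_gapAbove_of_lt hC h1 hsmall hY hbY hgap
      exact ih u huY hu hbu hgapu

end MinimalShortGap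

theorem TwoCoinGreedy.sub_one_le_sub {C : List ℕ} {c : ℕ} (hC : TwoCoinGreedy C) (h1 : 1 ∈ C)
    (hsmall : ∀ x ∈ C, x = 1 ∨ c ≤ x) {x y : ℕ} (hx : x ∈ C) (hy : y ∈ C) (hxy : x < y) :
    c - 1 ≤ y - x := by
  induction y using Nat.strong_induction_on generalizing x with
  | _ y ih =>
    by_contra! hshort
    exact MinimalShortGap.false hC h1 hsmall
      ⟨hx, hy, hxy, hshort, fun z hz z' hz' hzz' hz'y => ih z' hz'y hz hz' hzz'⟩

theorem stmt_9 (C : List ℕ) (hchain : List.Chain' (· < ·) C)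
    (hhead : C.getD 0 0 = 1) (hord : Orderly C) :
    ∀ i : ℕ, 2 ≤ i → i ≤ C.length →
      C.getD 1 0 - 1 ≤ C.getD (i - 1) 0 - C.getD (i - 2) 0 := by
  intro i hi2 hiC
  have hsorted : C.Pairwise (· < ·) := List.isChain_iff_pairwise.1 hchain
  have h1 : 1 ∈ C := by
    rw [← hhead, List.getD_eq_getElem _ _ (by omega)]
    exact List.getElem_mem _
  have hpos : ∀ x ∈ C, 0 < x := fun x hx => by
    have := hsorted.getD_zero_le 0 hx
    omega
  have hsmall : ∀ x ∈ C, x = 1 ∨ C.getD 1 0 ≤ x := fun x hx =>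
    hhead ▸ hsorted.eq_getD_zero_or_getD_one_le 0 hx
  rw [List.getD_eq_getElem C 0 (n := i - 1) (by omega),
    List.getD_eq_getElem C 0 (n := i - 2) (by omega)]
  refine (hord.twoCoinGreedy h1 hpos).sub_one_le_sub h1 hsmall (List.getElem_mem _)
    (List.getElem_mem _) ?_
  convert hchain.getElem (i - 2) (by omega) using 2
  omega
end
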